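/- The Peskin 4-point IB kernel satisfies the first moment condition: for every r ∈ ℝ, the sum over all j ∈ ℤ of (r − j) · φ_IB4(r − j) equals 0 (the sum has only finitely many nonzero terms since φ_IB4 vanishes outside [−2,2]). -/
import Mathlib


/-- The Peskin 4-point immersed boundary kernel. -/
noncomputable def phiIB4 (r : ℝ) : ℝ :=
  if r ≤ -2 then 0
  else if r ≤ -1 then (5 + 2 * r - Real.sqrt (-7 - 12 * r - 4 * r ^ 2)) / 8
  else if r ≤ 0 then (3 + 2 * r + Real.sqrt (1 - 4 * r - 4 * r ^ 2)) / 8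
  else if r ≤ 1 then (3 - 2 * r + Real.sqrt (1 + 4 * r - 4 * r ^ 2)) / 8
  else if r ≤ 2 then (5 - 2 * r - Real.sqrt (-7 + 12 * r - 4 * r ^ 2)) / 8
  else 0

lemma phiIB4_zero_of_le (r : ℝ) (h : r ≤ -2) : phiIB4 r = 0 := by
  unfold phiIB4; rw [if_pos h]

lemma phiIB4_zero_of_ge (r : ℝ) (h : 2 ≤ r) : phiIB4 r = 0 := by
  unfold phiIB4
  rcases lt_or_eq_of_le h with h2 | h2
  · rw [if_neg (by linarith), if_neg (by linarith), if_neg (by linarith),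
      if_neg (by linarith), if_neg (by linarith)]
  · rw [← h2]
    norm_num [show (-7 + 12 * 2 - 4 * (2:ℝ) ^ 2 : ℝ) = 1 by norm_num, Real.sqrt_one]

/-- The Peskin 4-point IB kernel satisfies the first moment condition:
`∑_{j ∈ ℤ} (r - j) φ_IB4(r - j) = 0` for every `r`. -/
theorem phiIB4_first_moment : ∀ r : ℝ, ∑' j : ℤ, (r - j) * phiIB4 (r - j) = 0 := by
  intro r
  set n := ⌊r⌋ with hn
  have ht0 : 0 ≤ r - n := sub_nonneg.2 (Int.floor_le r)
  have ht1 : r - n < 1 := by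
    have := Int.lt_floor_add_one r; rw [hn]; linarith
  have key : ∀ j : ℤ, j ∉ ({n - 1, n, n + 1, n + 2} : Finset ℤ) →
      (r - j) * phiIB4 (r - j) = 0 := by
    intro j hj
    simp only [Finset.mem_insert, Finset.mem_singleton] at hj
    push_neg at hj
    rcases le_or_gt j (n - 2) with h | h
    · have hjr : (j : ℝ) ≤ (n : ℝ) - 2 := by exact_mod_cast h
      have : 2 ≤ r - j := by linarith
      rw [phiIB4_zero_of_ge _ this, mul_zero]
    · have h3 : n + 3 ≤ j := by omega
      have hjr : (n : ℝ) + 3 ≤ (j : ℝ) := by exact_mod_cast h3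
      have : r - j ≤ -2 := by linarith
      rw [phiIB4_zero_of_le _ this, mul_zero]
  rw [tsum_eq_sum key]
  have e1 : r - ((n - 1 : ℤ) : ℝ) = (r - n) + 1 := by push_cast; ring
  have e2 : r - ((n + 1 : ℤ) : ℝ) = (r - n) - 1 := by push_cast; ring
  have e3 : r - ((n + 2 : ℤ) : ℝ) = (r - n) - 2 := by push_cast; ring
  rw [Finset.sum_insert (by simp <;> omega), Finset.sum_insert (by simp <;> omega),
    Finset.sum_insert (by simp <;> omega), Finset.sum_singleton, e1, e2, e3]
  set t := r - (n : ℝ) with htdef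
  by_cases hz : t = 0
  · rw [hz]
    norm_num [phiIB4]
  · have h0 : 0 < t := lt_of_le_of_ne ht0 (Ne.symm hz)
    have e4 : phiIB4 (t + 1) = (3 - 2 * t - Real.sqrt (1 + 4 * t - 4 * t ^ 2)) / 8 := by
      unfold phiIB4
      rw [if_neg (by linarith), if_neg (by linarith), if_neg (by linarith),
        if_neg (by linarith), if_pos (by linarith),
        show (-7 + 12 * (t + 1) - 4 * (t + 1) ^ 2 : ℝ) = 1 + 4 * t - 4 * t ^ 2 by ring]
      ring
    have e5 : phiIB4 t = (3 - 2 * t + Real.sqrt (1 + 4 * t - 4 * t ^ 2)) / 8 := by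
      unfold phiIB4
      rw [if_neg (by linarith), if_neg (by linarith), if_neg (by linarith),
        if_pos (by linarith)]
    have e6 : phiIB4 (t - 1) = (1 + 2 * t + Real.sqrt (1 + 4 * t - 4 * t ^ 2)) / 8 := by
      unfold phiIB4
      rw [if_neg (by linarith), if_neg (by linarith), if_pos (by linarith),
        show (1 - 4 * (t - 1) - 4 * (t - 1) ^ 2 : ℝ) = 1 + 4 * t - 4 * t ^ 2 by ring]
      ring
    have e7 : phiIB4 (t - 2) = (1 + 2 * t - Real.sqrt (1 + 4 * t - 4 * t ^ 2)) / 8 := by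
      unfold phiIB4
      rw [if_neg (by linarith), if_pos (by linarith),
        show (-7 - 12 * (t - 2) - 4 * (t - 2) ^ 2 : ℝ) = 1 + 4 * t - 4 * t ^ 2 by ring]
      ring
    rw [e4, e5, e6, e7]
    ring
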